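/- arXiv:1106.3199 — 2 statements merged into one kernel-verified Lean document; each statement's English description precedes it below -/
import Mathlib

section
/- Let a < b, let f : [a,b] → ℝ be càdlàg on [a,b], and let c > 0. Suppose g : [a,b] → ℝ satisfies sup_{s ∈ [a,b]} |f(s) − g(s)| ≤ c/2, has TV(g,[a,b]) < ∞, and admits nondecreasing functions g_U, g_D : [a,b] → [0,∞) with g_U(a) = g_D(a) = 0 and g(t) = g(a) + g_U(t) − g_D(t) for all t ∈ [a,b]. Then g_U(s) ≥ UTV^c(f,[a,s]) and g_D(s) ≥ DTV^c(f,[a,s]) for every s ∈ (a,b]. -/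
open Set Filter Topology ENNReal

/-- Truncated variation `TV^c(f,[a,b])` as a supremum over partitions, valued in `[0,∞]`. -/
noncomputable def truncVar (f : ℝ → ℝ) (a b c : ℝ) : ℝ≥0∞ :=
  ⨆ (n : ℕ) (t : ℕ → ℝ) (_ : a ≤ t 0) (_ : ∀ i < n, t i < t (i + 1)) (_ : t n ≤ b),
    ∑ i ∈ Finset.range n, ENNReal.ofReal (max (|f (t (i + 1)) - f (t i)| - c) 0)

/-- Total variation `TV(f,[a,b])`, valued in `[0,∞]`. -/
noncomputable def totalVar (f : ℝ → ℝ) (a b : ℝ) : ℝ≥0∞ := truncVar f a b 0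

/-- Upward truncated variation `UTV^c(f,[a,b])`. -/
noncomputable def upTruncVar (f : ℝ → ℝ) (a b c : ℝ) : ℝ≥0∞ :=
  ⨆ (n : ℕ) (t : ℕ → ℝ) (_ : a ≤ t 0) (_ : ∀ i < n, t i < t (i + 1)) (_ : t n ≤ b),
    ∑ i ∈ Finset.range n, ENNReal.ofReal (max (f (t (i + 1)) - f (t i) - c) 0)

/-- Downward truncated variation `DTV^c(f,[a,b])`. -/
noncomputable def downTruncVar (f : ℝ → ℝ) (a b c : ℝ) : ℝ≥0∞ :=
  ⨆ (n : ℕ) (t : ℕ → ℝ) (_ : a ≤ t 0) (_ : ∀ i < n, t i < t (i + 1)) (_ : t n ≤ b),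
    ∑ i ∈ Finset.range n, ENNReal.ofReal (max (f (t i) - f (t (i + 1)) - c) 0)

/-- `f` is càdlàg on `[a,b]`: right-continuous at every point of `[a,b)` and
with a finite left limit at every point of `(a,b]`. -/
def CadlagOn (f : ℝ → ℝ) (a b : ℝ) : Prop :=
  (∀ x ∈ Set.Ico a b, Filter.Tendsto f (𝓝[>] x) (𝓝 (f x))) ∧
  (∀ x ∈ Set.Ioc a b, ∃ L : ℝ, Filter.Tendsto f (𝓝[<] x) (𝓝 L))

/-!
On a partition interval `[x, y] ⊆ [a, s]` the increment of `f` exceeds that of `g` by at most `c`,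
and since `g_D` is nondecreasing, the increment of `g = g(a) + g_U - g_D` is at most that of `g_U`.
So every summand of `UTV^c` is dominated by an increment of `g_U`, and these telescope to at most
`g_U(s) - g_U(a) = g_U(s)`. The downward case is the upward one for `-f`, approximated by
`-g = -g(a) + g_D - g_U`.
-/

lemma mem_Icc_of_partition {t : ℕ → ℝ} {n : ℕ} {a s : ℝ} (h0 : a ≤ t 0)
    (ht : ∀ i < n, t i < t (i + 1)) (hn : t n ≤ s) {i : ℕ} (hi : i ≤ n) : t i ∈ Icc a s := by
  have hmono : MonotoneOn t (Iic n) := (strictMonoOn_Iic_of_lt_succ ht).monotoneOn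
  exact ⟨h0.trans (hmono (Nat.zero_le n) hi (Nat.zero_le i)), (hmono hi (le_refl n) hi).trans hn⟩

lemma sum_range_ofReal_sub_eq_of_le_succ {u : ℕ → ℝ} {n : ℕ} (hu : ∀ i < n, u i ≤ u (i + 1)) :
    ∑ i ∈ Finset.range n, ENNReal.ofReal (u (i + 1) - u i) = ENNReal.ofReal (u n - u 0) := by
  rw [← ENNReal.ofReal_sum_of_nonneg fun i hi => sub_nonneg.2 (hu i (Finset.mem_range.1 hi)),
    Finset.sum_range_sub]

lemma upTruncVar_le_of_sub_le_sub {f u : ℝ → ℝ} {a s c : ℝ} (hu : MonotoneOn u (Icc a s))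
    (hinc : ∀ x ∈ Icc a s, ∀ y ∈ Icc a s, x < y → f y - f x - c ≤ u y - u x) :
    upTruncVar f a s c ≤ ENNReal.ofReal (u s - u a) := by
  simp only [upTruncVar, iSup_le_iff]
  intro n t h0 ht hn
  have hmem : ∀ i ≤ n, t i ∈ Icc a s := fun i hi => mem_Icc_of_partition h0 ht hn hi
  have hsucc : ∀ i < n, u (t i) ≤ u (t (i + 1)) := fun i hi =>
    hu (hmem i hi.le) (hmem (i + 1) hi) (ht i hi).le
  have h0mem := hmem 0 (Nat.zero_le n)
  have hnmem := hmem n le_rfl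
  have hs : s ∈ Icc a s := ⟨h0mem.1.trans h0mem.2, le_rfl⟩
  calc ∑ i ∈ Finset.range n, ENNReal.ofReal (max (f (t (i + 1)) - f (t i) - c) 0)
      ≤ ∑ i ∈ Finset.range n, ENNReal.ofReal (u (t (i + 1)) - u (t i)) := by
        refine Finset.sum_le_sum fun i hi => ENNReal.ofReal_le_ofReal ?_
        have hi := Finset.mem_range.1 hi
        exact max_le (hinc _ (hmem i hi.le) _ (hmem (i + 1) hi) (ht i hi))
          (sub_nonneg.2 (hsucc i hi))
    _ = ENNReal.ofReal (u (t n) - u (t 0)) := sum_range_ofReal_sub_eq_of_le_succ hsucc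
    _ ≤ ENNReal.ofReal (u s - u a) := by
        refine ENNReal.ofReal_le_ofReal (sub_le_sub ?_ ?_)
        · exact hu hnmem hs hnmem.2
        · exact hu (left_mem_Icc.2 hs.1) h0mem h0mem.1

lemma downTruncVar_eq_upTruncVar_neg (f : ℝ → ℝ) (a b c : ℝ) :
    downTruncVar f a b c = upTruncVar (-f) a b c := by
  simp only [downTruncVar, upTruncVar, Pi.neg_apply, neg_sub_neg]

theorem jordan_parts_ge_truncVars_of_uniform_approx_general
    (a b c : ℝ) (f : ℝ → ℝ)
    (g gU gD : ℝ → ℝ)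
    (happrox : ∀ s ∈ Set.Icc a b, |f s - g s| ≤ c / 2)
    (hUmono : MonotoneOn gU (Set.Icc a b)) (hDmono : MonotoneOn gD (Set.Icc a b))
    (hUa : gU a = 0) (hDa : gD a = 0)
    (hdecomp : ∀ t ∈ Set.Icc a b, g t = g a + gU t - gD t) :
    ∀ s ∈ Set.Ioc a b,
      upTruncVar f a s c ≤ ENNReal.ofReal (gU s) ∧
      downTruncVar f a s c ≤ ENNReal.ofReal (gD s) := by
  intro s hs
  have hsub : Icc a s ⊆ Icc a b := Icc_subset_Icc_right hs.2
  have hinc : ∀ x ∈ Icc a s, ∀ y ∈ Icc a s, x < y →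
      f y - f x - c ≤ gU y - gU x ∧ (-f) y - (-f) x - c ≤ gD y - gD x := by
    intro x hx y hy hxy
    have hfx := abs_le.1 (happrox x (hsub hx))
    have hfy := abs_le.1 (happrox y (hsub hy))
    have hgx := hdecomp x (hsub hx)
    have hgy := hdecomp y (hsub hy)
    have hU := hUmono (hsub hx) (hsub hy) hxy.le
    have hD := hDmono (hsub hx) (hsub hy) hxy.le
    refine ⟨by linarith, ?_⟩
    simp only [Pi.neg_apply]
    linarith
  constructor
  · simpa [hUa] using upTruncVar_le_of_sub_le_sub (hUmono.mono hsub)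
      fun x hx y hy hxy => (hinc x hx y hy hxy).1
  · simpa [hDa, downTruncVar_eq_upTruncVar_neg] using upTruncVar_le_of_sub_le_sub
      (hDmono.mono hsub) fun x hx y hy hxy => (hinc x hx y hy hxy).2

/-- If `g` uniformly approximates `f` with accuracy `c/2` and
`g = g(a) + g_U - g_D` with `g_U, g_D` nondecreasing, nonnegative and vanishing at `a`,
then `g_U ≥ UTV^c` and `g_D ≥ DTV^c` on `(a,b]`. -/
theorem jordan_parts_ge_truncVars_of_uniform_approx
    (a b c : ℝ) (hab : a < b) (hc : 0 < c) (f : ℝ → ℝ) (hf : CadlagOn f a b)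
    (g gU gD : ℝ → ℝ)
    (happrox : ∀ s ∈ Set.Icc a b, |f s - g s| ≤ c / 2)
    (hfin : totalVar g a b < ⊤)
    (hUmono : MonotoneOn gU (Set.Icc a b)) (hDmono : MonotoneOn gD (Set.Icc a b))
    (hUnn : ∀ t ∈ Set.Icc a b, 0 ≤ gU t) (hDnn : ∀ t ∈ Set.Icc a b, 0 ≤ gD t)
    (hUa : gU a = 0) (hDa : gD a = 0)
    (hdecomp : ∀ t ∈ Set.Icc a b, g t = g a + gU t - gD t) :
    ∀ s ∈ Set.Ioc a b,
      upTruncVar f a s c ≤ ENNReal.ofReal (gU s) ∧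
      downTruncVar f a s c ≤ ENNReal.ofReal (gD s) :=
  jordan_parts_ge_truncVars_of_uniform_approx_general a b c f g gU gD happrox hUmono hDmono hUa hDa
    hdecomp
end

section
/- Let a < b, let f : [a,b] → ℝ be càdlàg on [a,b], and let c > 0. Define g : [a,b] → ℝ by g(a) := f(a) and g(s) := f(a) + UTV^c(f,[a,s]) − DTV^c(f,[a,s]) for s ∈ (a,b]. Then (i) |(g(s) − g(u)) − (f(s) − f(u))| ≤ c for all a ≤ u ≤ s ≤ b, and (ii) TV(g,[a,s]) = TV^c(f,[a,s]) for every s ∈ (a,b]. -/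
/-!
Write `U t`, `D t`, `T t` for `UTV^c`, `DTV^c`, `TV^c` of `f` on `[a, t]`, so `g = f a + U - D`.

Two inequalities between partition sums carry the proof. First, for `u ≤ s`,
`U s ≤ U u + DTV^c(f, [u, s]) + (f s - f u) + c`: peel off the last link `(p, q)` of an upward
partition; if it rises by more than `c`, the fall from `q` to `s` is charged to the downward
variation on `[u, s]`, and a link crossing `u` is cut at `u`. Applied to `f` and `-f`, with the
superadditivity of `U` and `D`, this is (i). Second, `U + D ≤ T`: of the last links `(p, q)` and
`(p', q')` of an upward and a downward partition, either one ends before the other starts, or they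
overlap and can be traded for `(p, p')` and `(q, q')`, which carry the same total. Since
`|Δg| ≤ ΔU + ΔD`, this gives `TV(g) ≤ T`; conversely `TV^c(f) ≤ TV(g)` link by link by (i).

All of this needs `T b < ∞`: a càdlàg `f` admits finitely many cut points such that `f` moves by
at most `c` between points of `[a, b]` that no cut separates; every link with positive truncated
increment then crosses a cut, and `f` is bounded.
-/

open Set Filter Topology ENNReal

section ChainSum

variable {α : Type*} {w : α → α → ℝ}

def chainSum (w : α → α → ℝ) : List α → ℝ
  | x :: y :: l => w x y + chainSum w (y :: l)
  | _ => 0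

@[simp] lemma chainSum_nil : chainSum w [] = 0 := rfl

@[simp] lemma chainSum_singleton (x : α) : chainSum w [x] = 0 := rfl

@[simp] lemma chainSum_cons_cons (x y : α) (l : List α) :
    chainSum w (x :: y :: l) = w x y + chainSum w (y :: l) := rfl

lemma chainSum_concat_concat (L : List α) (p q : α) :
    chainSum w (L ++ [p] ++ [q]) = chainSum w (L ++ [p]) + w p q := by
  rw [List.append_assoc, List.singleton_append]
  induction L with
  | nil => simp
  | cons x L ih =>
    cases L with
    | nil => simp
    | cons y L => simp only [List.cons_append, chainSum_cons_cons] at ih ⊢; rw [ih]; ring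

lemma chainSum_eq_zero_or_exists_concat_concat (L : List α) :
    chainSum w L = 0 ∨ ∃ L' p q, L = L' ++ [p] ++ [q] := by
  rcases L.eq_nil_or_concat with rfl | ⟨L₀, q, rfl⟩
  · simp
  rcases L₀.eq_nil_or_concat with rfl | ⟨L', p, rfl⟩
  · simp
  exact Or.inr ⟨L', p, q, by simp⟩

lemma chainSum_add_le_append (hw : ∀ p q, 0 ≤ w p q) (X Y : List α) :
    chainSum w X + chainSum w Y ≤ chainSum w (X ++ Y) := by
  induction X with
  | nil => simp
  | cons x X ih =>
    cases X with
    | nil => cases Y <;> simp [hw]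
    | cons y X => simp only [List.cons_append, chainSum_cons_cons] at ih ⊢; linarith

lemma chainSum_map_range (t : ℕ → α) (n : ℕ) :
    chainSum w ((List.range (n + 1)).map t) = ∑ i ∈ Finset.range n, w (t i) (t (i + 1)) := by
  induction n generalizing t with
  | zero => simp
  | succ n ih =>
    have hsplit : (List.range (n + 2)).map t =
        t 0 :: t 1 :: ((List.range n).map fun i => t (i + 2)) := by
      simp [List.range_succ_eq_map]
    have hsplit' : (List.range (n + 1)).map (fun i => t (i + 1)) =
        t 1 :: ((List.range n).map fun i => t (i + 2)) := by
      simp [List.range_succ_eq_map]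
    rw [hsplit, chainSum_cons_cons, ← hsplit', ih, Finset.sum_range_succ', add_comm]

end ChainSum

section WeightedVariation

variable {α : Type*} [LinearOrder α] {w w' : α → α → ℝ} {a b : α} {L : List α}

lemma exists_pairwise_lt_chainSum_eq (hdiag : ∀ x, w x x = 0) :
    ∀ {L : List α}, L.Pairwise (· ≤ ·) →
      ∃ L' : List α, L'.Pairwise (· < ·) ∧ (∀ x ∈ L', x ∈ L) ∧ L'.head? = L.head? ∧
        chainSum w L' = chainSum w L
  | [], _ => ⟨[], by simp⟩
  | [x], _ => ⟨[x], by simp⟩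
  | x :: y :: l, hL => by
    obtain ⟨hx, hyl⟩ := List.pairwise_cons.1 hL
    obtain ⟨_ | ⟨z, L'⟩, hL', hsub, hhead, hsum⟩ := exists_pairwise_lt_chainSum_eq hdiag hyl
    · simp at hhead
    obtain rfl : z = y := by simpa using hhead
    rcases (hx z (by simp)).eq_or_lt with rfl | hxz
    · exact ⟨x :: L', hL', fun u hu => List.mem_cons_of_mem _ (hsub u hu), rfl,
        by simp [hdiag, ← hsum]⟩
    refine ⟨x :: z :: L', List.pairwise_cons.2 ⟨fun u hu => hxz.trans_le ?_, hL'⟩,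
      fun u hu => ?_, rfl, by simp [← hsum]⟩
    · rcases List.mem_cons.1 hu with rfl | hu
      exacts [le_rfl, ((List.pairwise_cons.1 hL').1 u hu).le]
    · rcases List.mem_cons.1 hu with rfl | hu
      exacts [List.mem_cons_self, List.mem_cons_of_mem _ (hsub u hu)]

/-- Repeated points are allowed: for weights vanishing on the diagonal they change nothing
(`exists_pairwise_lt_chainSum_eq`), and they make gluing partitions at a common point free. -/
def IsPartition (a b : α) (L : List α) : Prop :=
  L.Pairwise (· ≤ ·) ∧ ∀ x ∈ L, x ∈ Icc a b

lemma IsPartition.of_cons {x : α} (h : IsPartition a b (x :: L)) : IsPartition a b L :=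
  ⟨(List.pairwise_cons.1 h.1).2, fun y hy => h.2 y (List.mem_cons_of_mem _ hy)⟩

lemma isPartition_concat_iff {x : α} :
    IsPartition a b (L ++ [x]) ↔ IsPartition a x L ∧ x ∈ Icc a b := by
  constructor
  · rintro ⟨hp, hm⟩
    rw [List.pairwise_append] at hp
    exact ⟨⟨hp.1, fun y hy => ⟨(hm y (by simp [hy])).1, hp.2.2 y hy x (by simp)⟩⟩, hm x (by simp)⟩
  · rintro ⟨⟨hp, hm⟩, hx⟩
    refine ⟨List.pairwise_append.2 ⟨hp, by simp, fun y hy z hz => ?_⟩, fun y hy => ?_⟩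
    · rw [List.mem_singleton.1 hz]
      exact (hm y hy).2
    · rcases List.mem_append.1 hy with hy | hy
      · exact ⟨(hm y hy).1, (hm y hy).2.trans hx.2⟩
      · rwa [List.mem_singleton.1 hy]

lemma isPartition_concat_concat_iff {p q : α} :
    IsPartition a b (L ++ [p] ++ [q]) ↔ IsPartition a p L ∧ a ≤ p ∧ p ≤ q ∧ q ≤ b := by
  rw [isPartition_concat_iff, isPartition_concat_iff]
  constructor
  · rintro ⟨⟨hL, hp⟩, hq⟩
    exact ⟨hL, hp.1, hp.2, hq.2⟩
  · rintro ⟨hL, hap, hpq, hqb⟩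
    exact ⟨⟨hL, hap, hpq⟩, hap.trans hpq, hqb⟩

noncomputable def weightedVar (w : α → α → ℝ) (a b : α) : ℝ≥0∞ :=
  ⨆ (n : ℕ) (t : ℕ → α) (_ : a ≤ t 0) (_ : ∀ i < n, t i < t (i + 1)) (_ : t n ≤ b),
    ∑ i ∈ Finset.range n, ENNReal.ofReal (w (t i) (t (i + 1)))

lemma weightedVar_le_of_forall (hw : ∀ p q, 0 ≤ w p q) {x : ℝ≥0∞}
    (h : ∀ L, IsPartition a b L → ENNReal.ofReal (chainSum w L) ≤ x) : weightedVar w a b ≤ x := by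
  refine iSup_le fun n => iSup_le fun t => iSup_le fun ha => iSup_le fun ht => iSup_le fun hb => ?_
  have hmono : MonotoneOn t (Iic n) :=
    (strictMonoOn_Iic_of_lt_succ fun m hm => by simpa using ht m hm).monotoneOn
  rw [← ENNReal.ofReal_sum_of_nonneg fun i _ => hw _ _, ← chainSum_map_range]
  refine h _ ⟨List.pairwise_map.2 (List.pairwise_lt_range.imp_of_mem fun hi hj hij => ?_), ?_⟩
  · simp only [List.mem_range] at hi hj
    exact hmono (mem_Iic.2 (by omega)) (mem_Iic.2 (by omega)) hij.le
  · simp only [List.mem_map, List.mem_range]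
    rintro _ ⟨i, hi, rfl⟩
    exact ⟨ha.trans (hmono (by simp) (mem_Iic.2 (by omega)) (Nat.zero_le i)),
      (hmono (mem_Iic.2 (by omega)) (by simp) (by omega)).trans hb⟩

lemma ofReal_chainSum_le_weightedVar (hw : ∀ p q, 0 ≤ w p q) (hdiag : ∀ x, w x x = 0)
    (hL : IsPartition a b L) : ENNReal.ofReal (chainSum w L) ≤ weightedVar w a b := by
  obtain ⟨L', hL', hsub, -, hsum⟩ := exists_pairwise_lt_chainSum_eq hdiag hL.1
  rw [← hsum]
  obtain _ | ⟨x, l⟩ := L'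
  · simp
  set t : ℕ → α := fun i => (x :: l).getD i x
  have ht : ∀ i (hi : i < l.length + 1), t i = (x :: l)[i] := fun i hi =>
    List.getD_eq_getElem _ _ hi
  have hL't : x :: l = (List.range (l.length + 1)).map t :=
    List.ext_getElem (by simp) fun i h₁ _ => by simp [ht i (by simpa using h₁)]
  have hmem : ∀ i ≤ l.length, t i ∈ Icc a b := fun i hi =>
    hL.2 _ (hsub _ (by rw [hL't]; exact List.mem_map_of_mem (List.mem_range.2 (by omega))))
  rw [hL't, chainSum_map_range, ENNReal.ofReal_sum_of_nonneg fun i _ => hw _ _]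
  refine le_iSup_of_le l.length (le_iSup_of_le t ?_)
  refine le_iSup_of_le (hmem 0 (Nat.zero_le _)).1 (le_iSup_of_le (fun i hi => ?_)
    (le_iSup_of_le (hmem _ le_rfl).2 le_rfl))
  rw [ht i (by omega), ht (i + 1) (by omega)]
  exact List.pairwise_iff_getElem.1 hL' i (i + 1) (by simp; omega) (by simp; omega) (by omega)

lemma chainSum_le_toReal_weightedVar (hw : ∀ p q, 0 ≤ w p q) (hdiag : ∀ x, w x x = 0)
    (hL : IsPartition a b L) (hV : weightedVar w a b ≠ ⊤) :
    chainSum w L ≤ (weightedVar w a b).toReal :=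
  (ENNReal.ofReal_le_iff_le_toReal hV).1 (ofReal_chainSum_le_weightedVar hw hdiag hL)

lemma toReal_weightedVar_le (hw : ∀ p q, 0 ≤ w p q) {x : ℝ}
    (h : ∀ L, IsPartition a b L → chainSum w L ≤ x) : (weightedVar w a b).toReal ≤ x := by
  have hx : 0 ≤ x := by simpa using h [] ⟨List.Pairwise.nil, by simp⟩
  exact ENNReal.toReal_le_of_le_ofReal hx
    (weightedVar_le_of_forall hw fun L hL => ENNReal.ofReal_le_ofReal (h L hL))

lemma chainSum_le_chainSum (h : ∀ p q, a ≤ p → p ≤ q → q ≤ b → w p q ≤ w' p q) :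
    ∀ {L : List α}, IsPartition a b L → chainSum w L ≤ chainSum w' L
  | [], _ | [_], _ => le_rfl
  | x :: y :: l, hL => by
    have hx := hL.2 x (by simp)
    have hy := hL.2 y (by simp)
    exact add_le_add (h x y hx.1 ((List.pairwise_cons.1 hL.1).1 y (by simp)) hy.2)
      (chainSum_le_chainSum h hL.of_cons)

lemma weightedVar_mono_weight (hw : ∀ p q, 0 ≤ w p q) (hw' : ∀ p q, 0 ≤ w' p q)
    (hdiag' : ∀ x, w' x x = 0) (h : ∀ p q, a ≤ p → p ≤ q → q ≤ b → w p q ≤ w' p q) :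
    weightedVar w a b ≤ weightedVar w' a b :=
  weightedVar_le_of_forall hw fun _ hL =>
    (ENNReal.ofReal_le_ofReal (chainSum_le_chainSum h hL)).trans
    (ofReal_chainSum_le_weightedVar hw' hdiag' hL)

lemma weightedVar_mono (hw : ∀ p q, 0 ≤ w p q) (hdiag : ∀ x, w x x = 0) {a' b' : α}
    (ha : a ≤ a') (hb : b' ≤ b) : weightedVar w a' b' ≤ weightedVar w a b :=
  weightedVar_le_of_forall hw fun _ hL => ofReal_chainSum_le_weightedVar hw hdiag
    ⟨hL.1, fun x hx => ⟨ha.trans (hL.2 x hx).1, (hL.2 x hx).2.trans hb⟩⟩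

lemma le_toReal_weightedVar (hw : ∀ p q, 0 ≤ w p q) (hdiag : ∀ x, w x x = 0) {p q : α}
    (hap : a ≤ p) (hpq : p ≤ q) (hqb : q ≤ b) (hV : weightedVar w a b ≠ ⊤) :
    w p q ≤ (weightedVar w a b).toReal := by
  simpa using chainSum_le_toReal_weightedVar hw hdiag (L := [p, q])
    ⟨by simpa using hpq, by simp [hap, hpq.trans hqb, hap.trans hpq, hqb]⟩ hV

lemma toReal_weightedVar_add_le (hw : ∀ p q, 0 ≤ w p q) (hdiag : ∀ x, w x x = 0) {p : α}
    (hap : a ≤ p) (hpb : p ≤ b) (hV : weightedVar w a b ≠ ⊤) :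
    (weightedVar w a p).toReal + (weightedVar w p b).toReal ≤ (weightedVar w a b).toReal := by
  have hXY : ∀ X, IsPartition a p X → ∀ Y, IsPartition p b Y →
      chainSum w X + chainSum w Y ≤ (weightedVar w a b).toReal := by
    intro X hX Y hY
    refine (chainSum_add_le_append hw X Y).trans
      (chainSum_le_toReal_weightedVar hw hdiag ⟨?_, ?_⟩ hV)
    · exact List.pairwise_append.2 ⟨hX.1, hY.1, fun x hx y hy => (hX.2 x hx).2.trans (hY.2 y hy).1⟩
    · intro x hx
      rcases List.mem_append.1 hx with hx | hx
      exacts [⟨(hX.2 x hx).1, (hX.2 x hx).2.trans hpb⟩, ⟨hap.trans (hY.2 x hx).1, (hY.2 x hx).2⟩]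
  have hY : ∀ Y, IsPartition p b Y →
      (weightedVar w a p).toReal ≤ (weightedVar w a b).toReal - chainSum w Y :=
    fun Y hY => toReal_weightedVar_le hw fun X hX => by linarith [hXY X hX Y hY]
  have := toReal_weightedVar_le (a := p) (b := b)
    (x := (weightedVar w a b).toReal - (weightedVar w a p).toReal) hw fun Y hY' => by
      linarith [hY Y hY']
  linarith

lemma toReal_weightedVar_add_le_of_le (hw : ∀ p q, 0 ≤ w p q) (hdiag : ∀ x, w x x = 0)
    {m p q : α} (ham : a ≤ m) (hmp : m ≤ p) (hpq : p ≤ q) (hqb : q ≤ b)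
    (hV : weightedVar w a b ≠ ⊤) :
    (weightedVar w a m).toReal + w p q ≤ (weightedVar w a b).toReal := by
  have hVap : weightedVar w a p ≠ ⊤ :=
    ne_top_of_le_ne_top hV (weightedVar_mono hw hdiag le_rfl (hpq.trans hqb))
  have hVpb : weightedVar w p b ≠ ⊤ :=
    ne_top_of_le_ne_top hV (weightedVar_mono hw hdiag (ham.trans hmp) le_rfl)
  calc (weightedVar w a m).toReal + w p q
      ≤ (weightedVar w a p).toReal + (weightedVar w p b).toReal :=
        add_le_add (ENNReal.toReal_mono hVap (weightedVar_mono hw hdiag le_rfl hmp))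
          (le_toReal_weightedVar hw hdiag le_rfl hpq hqb hVpb)
    _ ≤ (weightedVar w a b).toReal :=
        toReal_weightedVar_add_le hw hdiag (ham.trans hmp) (hpq.trans hqb) hV

lemma weightedVar_le_ofReal_sub (hw : ∀ p q, 0 ≤ w p q) {φ : α → ℝ}
    (h : ∀ p q, a ≤ p → p ≤ q → q ≤ b → w p q ≤ φ q - φ p) :
    weightedVar w a b ≤ ENNReal.ofReal (φ b - φ a) := by
  have key : ∀ (l : List α) (x : α), IsPartition a b (x :: l) →
      chainSum w (x :: l) ≤ φ b - φ x := by
    intro l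
    induction l with
    | nil =>
      intro x hL
      have hx := hL.2 x (by simp)
      simpa using (hw x b).trans (h x b hx.1 hx.2 le_rfl)
    | cons y l ih =>
      intro x hL
      have hx := hL.2 x (by simp)
      have hy := hL.2 y (by simp)
      have := h x y hx.1 ((List.pairwise_cons.1 hL.1).1 y (by simp)) hy.2
      simp only [chainSum_cons_cons]
      linarith [ih y hL.of_cons]
  refine weightedVar_le_of_forall hw fun L hL => ?_
  obtain _ | ⟨x, l⟩ := L
  · simp
  have hx := hL.2 x (by simp)
  exact ENNReal.ofReal_le_ofReal (by linarith [key l x hL, hw a x, h a x le_rfl hx.1 hx.2])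

end WeightedVariation

section TruncatedWeights

variable (f : ℝ → ℝ) (c : ℝ)

def truncDist (p q : ℝ) : ℝ := max (|f q - f p| - c) 0

def truncRise (p q : ℝ) : ℝ := max (f q - f p - c) 0

def truncFall (p q : ℝ) : ℝ := max (f p - f q - c) 0

lemma truncVar_eq_weightedVar (a b : ℝ) :
    truncVar f a b c = weightedVar (truncDist f c) a b := rfl

lemma upTruncVar_eq_weightedVar (a b : ℝ) :
    upTruncVar f a b c = weightedVar (truncRise f c) a b := rfl

lemma downTruncVar_eq_weightedVar (a b : ℝ) :
    downTruncVar f a b c = weightedVar (truncFall f c) a b := rfl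

lemma totalVar_eq_weightedVar (a b : ℝ) :
    totalVar f a b = weightedVar (truncDist f 0) a b := rfl

lemma truncDist_nonneg (p q : ℝ) : 0 ≤ truncDist f c p q := le_max_right _ _

lemma truncRise_nonneg (p q : ℝ) : 0 ≤ truncRise f c p q := le_max_right _ _

lemma truncFall_nonneg (p q : ℝ) : 0 ≤ truncFall f c p q := le_max_right _ _

lemma truncFall_eq_truncRise (p q : ℝ) : truncFall f c p q = truncRise f c q p := rfl

lemma truncRise_le_truncDist (p q : ℝ) : truncRise f c p q ≤ truncDist f c p q :=
  max_le_max (by linarith [le_abs_self (f q - f p)]) le_rfl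

lemma truncFall_le_truncDist (p q : ℝ) : truncFall f c p q ≤ truncDist f c p q :=
  max_le_max (by linarith [neg_abs_le (f q - f p)]) le_rfl

lemma truncRise_le_truncRise_add_max (p u q : ℝ) :
    truncRise f c p q ≤ truncRise f c p u + max (f q - f u) 0 := by
  unfold truncRise
  exact max_le (by linarith [le_max_left (f u - f p - c) 0, le_max_left (f q - f u) 0])
    (add_nonneg (le_max_right _ _) (le_max_right _ _))

lemma truncRise_add_truncFall_le {p q p' q' : ℝ} (hrise : c ≤ f q - f p) (hfall : c ≤ f p' - f q') :
    truncRise f c p q + truncFall f c p' q' ≤ truncRise f c p p' + truncDist f c q q' := by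
  have hpq : truncRise f c p q = f q - f p - c := max_eq_left (by linarith)
  have hpq' : truncFall f c p' q' = f p' - f q' - c := max_eq_left (by linarith)
  have hpp' : f p' - f p - c ≤ truncRise f c p p' := le_max_left _ _
  have hqq' : f q - f q' - c ≤ truncDist f c q q' :=
    le_max_of_le_left (by linarith [neg_abs_le (f q' - f q)])
  linarith

lemma truncRise_neg : truncRise (-f) c = truncFall f c := by
  ext p q
  simp only [truncRise, truncFall, Pi.neg_apply, neg_sub_neg]

lemma truncFall_neg : truncFall (-f) c = truncRise f c := by
  ext p q
  simp only [truncRise, truncFall, Pi.neg_apply, neg_sub_neg]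

lemma truncDist_neg : truncDist (-f) c = truncDist f c := by
  ext p q
  simp only [truncDist, Pi.neg_apply, neg_sub_neg, abs_sub_comm]

lemma upTruncVar_neg (a b : ℝ) : upTruncVar (-f) a b c = downTruncVar f a b c := by
  rw [upTruncVar_eq_weightedVar, truncRise_neg, downTruncVar_eq_weightedVar]

lemma downTruncVar_neg (a b : ℝ) : downTruncVar (-f) a b c = upTruncVar f a b c := by
  rw [downTruncVar_eq_weightedVar, truncFall_neg, upTruncVar_eq_weightedVar]

lemma truncVar_neg (a b : ℝ) : truncVar (-f) a b c = truncVar f a b c := by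
  rw [truncVar_eq_weightedVar, truncDist_neg, truncVar_eq_weightedVar]

variable {f c}

lemma truncDist_self (hc : 0 ≤ c) (x : ℝ) : truncDist f c x x = 0 := by simp [truncDist, hc]

lemma truncRise_self (hc : 0 ≤ c) (x : ℝ) : truncRise f c x x = 0 := by simp [truncRise, hc]

lemma truncFall_self (hc : 0 ≤ c) (x : ℝ) : truncFall f c x x = 0 := by simp [truncFall, hc]

lemma truncVar_mono (hc : 0 ≤ c) {a b a' b' : ℝ} (ha : a ≤ a') (hb : b' ≤ b) :
    truncVar f a' b' c ≤ truncVar f a b c :=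
  weightedVar_mono (truncDist_nonneg f c) (truncDist_self hc) ha hb

lemma upTruncVar_mono (hc : 0 ≤ c) {a b a' b' : ℝ} (ha : a ≤ a') (hb : b' ≤ b) :
    upTruncVar f a' b' c ≤ upTruncVar f a b c :=
  weightedVar_mono (truncRise_nonneg f c) (truncRise_self hc) ha hb

lemma downTruncVar_mono (hc : 0 ≤ c) {a b a' b' : ℝ} (ha : a ≤ a') (hb : b' ≤ b) :
    downTruncVar f a' b' c ≤ downTruncVar f a b c :=
  weightedVar_mono (truncFall_nonneg f c) (truncFall_self hc) ha hb

lemma upTruncVar_le_truncVar (hc : 0 ≤ c) (a b : ℝ) : upTruncVar f a b c ≤ truncVar f a b c := by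
  rw [upTruncVar_eq_weightedVar, truncVar_eq_weightedVar]
  exact weightedVar_mono_weight (truncRise_nonneg f c) (truncDist_nonneg f c) (truncDist_self hc)
    fun p q _ _ _ => truncRise_le_truncDist f c p q

lemma downTruncVar_le_truncVar (hc : 0 ≤ c) (a b : ℝ) :
    downTruncVar f a b c ≤ truncVar f a b c := by
  rw [← upTruncVar_neg, ← truncVar_neg]
  exact upTruncVar_le_truncVar hc a b

lemma upTruncVar_ne_top (hc : 0 ≤ c) {a b a' b' : ℝ} (hT : truncVar f a b c ≠ ⊤) (ha : a ≤ a')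
    (hb : b' ≤ b) : upTruncVar f a' b' c ≠ ⊤ :=
  ne_top_of_le_ne_top hT ((upTruncVar_le_truncVar hc a' b').trans (truncVar_mono hc ha hb))

lemma downTruncVar_ne_top (hc : 0 ≤ c) {a b a' b' : ℝ} (hT : truncVar f a b c ≠ ⊤) (ha : a ≤ a')
    (hb : b' ≤ b) : downTruncVar f a' b' c ≠ ⊤ :=
  ne_top_of_le_ne_top hT ((downTruncVar_le_truncVar hc a' b').trans (truncVar_mono hc ha hb))

lemma toReal_upTruncVar_add_le (hc : 0 ≤ c) {a p b : ℝ} (hap : a ≤ p) (hpb : p ≤ b)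
    (hU : upTruncVar f a b c ≠ ⊤) :
    (upTruncVar f a p c).toReal + (upTruncVar f p b c).toReal ≤ (upTruncVar f a b c).toReal := by
  simp only [upTruncVar_eq_weightedVar] at hU ⊢
  exact toReal_weightedVar_add_le (truncRise_nonneg f c) (truncRise_self hc) hap hpb hU

lemma toReal_downTruncVar_add_le (hc : 0 ≤ c) {a p b : ℝ} (hap : a ≤ p) (hpb : p ≤ b)
    (hD : downTruncVar f a b c ≠ ⊤) :
    (downTruncVar f a p c).toReal + (downTruncVar f p b c).toReal ≤
      (downTruncVar f a b c).toReal := by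
  simp only [← upTruncVar_neg] at hD ⊢
  exact toReal_upTruncVar_add_le hc hap hpb hD

lemma sub_sub_le_toReal_downTruncVar (hc : 0 ≤ c) {u s x y : ℝ}
    (hD : downTruncVar f u s c ≠ ⊤) (hux : u ≤ x) (hxy : x ≤ y) (hys : y ≤ s) :
    f x - f y - c ≤ (downTruncVar f u s c).toReal := by
  rw [downTruncVar_eq_weightedVar] at hD ⊢
  exact (le_max_left _ _).trans
    (le_toReal_weightedVar (truncFall_nonneg f c) (truncFall_self hc) hux hxy hys hD)

lemma chainSum_truncRise_le_toReal_upTruncVar (hc : 0 ≤ c) {a b : ℝ} {L : List ℝ}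
    (hU : upTruncVar f a b c ≠ ⊤) (hL : IsPartition a b L) :
    chainSum (truncRise f c) L ≤ (upTruncVar f a b c).toReal :=
  chainSum_le_toReal_weightedVar (truncRise_nonneg f c) (truncRise_self hc) hL hU

lemma chainSum_truncRise_le_toReal_truncVar (hc : 0 ≤ c) {a s : ℝ} {L : List ℝ}
    (hT : truncVar f a s c ≠ ⊤) (hL : IsPartition a s L) :
    chainSum (truncRise f c) L ≤ (truncVar f a s c).toReal := by
  rw [truncVar_eq_weightedVar] at hT ⊢
  exact (chainSum_le_chainSum (fun p q _ _ _ => truncRise_le_truncDist f c p q) hL).trans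
    (chainSum_le_toReal_weightedVar (truncDist_nonneg f c) (truncDist_self hc) hL hT)

lemma chainSum_truncFall_le_toReal_truncVar (hc : 0 ≤ c) {a s : ℝ} {L : List ℝ}
    (hT : truncVar f a s c ≠ ⊤) (hL : IsPartition a s L) :
    chainSum (truncFall f c) L ≤ (truncVar f a s c).toReal := by
  rw [← truncRise_neg, ← truncVar_neg] at *
  exact chainSum_truncRise_le_toReal_truncVar hc hT hL

lemma toReal_truncVar_add_truncDist_le (hc : 0 ≤ c) {a m p q s : ℝ}
    (hT : truncVar f a s c ≠ ⊤) (ham : a ≤ m) (hmp : m ≤ p) (hpq : p ≤ q) (hqs : q ≤ s) :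
    (truncVar f a m c).toReal + truncDist f c p q ≤ (truncVar f a s c).toReal := by
  rw [truncVar_eq_weightedVar] at hT ⊢
  exact toReal_weightedVar_add_le_of_le (truncDist_nonneg f c) (truncDist_self hc)
    ham hmp hpq hqs hT

end TruncatedWeights

section TruncatedVariations

variable {f : ℝ → ℝ} {c : ℝ}

lemma chainSum_truncRise_concat_concat_le_of_le (hc : 0 ≤ c) {a u s p q : ℝ} {L : List ℝ} (hpu : p ≤ u)
    (hus : u ≤ s) (hU : upTruncVar f a u c ≠ ⊤) (hD : downTruncVar f u s c ≠ ⊤)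
    (hL : IsPartition a s (L ++ [p] ++ [q])) :
    chainSum (truncRise f c) (L ++ [p] ++ [q]) ≤
      (upTruncVar f a u c).toReal + (downTruncVar f u s c).toReal + (f s - f u) + c := by
  obtain ⟨hLp, hap, hpq, hqs⟩ := isPartition_concat_concat_iff.1 hL
  have hus' := sub_sub_le_toReal_downTruncVar hc hD le_rfl hus le_rfl
  rcases le_or_gt q u with hqu | huq
  · linarith [chainSum_truncRise_le_toReal_upTruncVar hc hU
      (isPartition_concat_concat_iff.2 ⟨hLp, hap, hpq, hqu⟩)]
  -- the link `(p, q)` is cut at `u`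
  have hLu := chainSum_truncRise_le_toReal_upTruncVar hc hU
    (isPartition_concat_concat_iff.2 ⟨hLp, hap, hpu, le_rfl⟩)
  rw [chainSum_concat_concat] at hLu ⊢
  have hqs' := sub_sub_le_toReal_downTruncVar hc hD huq.le hqs le_rfl
  have : max (f q - f u) 0 ≤ (downTruncVar f u s c).toReal + (f s - f u) + c :=
    max_le (by linarith) (by linarith)
  linarith [truncRise_le_truncRise_add_max f c p u q]

theorem toReal_upTruncVar_le (hc : 0 ≤ c) {a u s : ℝ} (hus : u ≤ s)
    (hU : upTruncVar f a u c ≠ ⊤) (hD : downTruncVar f u s c ≠ ⊤) :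
    (upTruncVar f a s c).toReal ≤
      (upTruncVar f a u c).toReal + (downTruncVar f u s c).toReal + (f s - f u) + c := by
  rw [upTruncVar_eq_weightedVar f c a s]
  refine toReal_weightedVar_le (truncRise_nonneg f c) fun L hL => ?_
  induction hn : L.length using Nat.strong_induction_on generalizing s L with
  | _ n ih =>
  rcases chainSum_eq_zero_or_exists_concat_concat (w := truncRise f c) L with hL0 | ⟨L, p, q, rfl⟩
  · linarith [hL0, sub_sub_le_toReal_downTruncVar hc hD le_rfl hus le_rfl,
      ENNReal.toReal_nonneg (a := upTruncVar f a u c)]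
  rcases le_total p u with hpu | hup
  · exact chainSum_truncRise_concat_concat_le_of_le hc hpu hus hU hD hL
  obtain ⟨hLp, hap, hpq, hqs⟩ := isPartition_concat_concat_iff.1 hL
  have hlen : (L ++ [p]).length < n := by simp [← hn]
  rw [chainSum_concat_concat]
  rcases le_total (f q - f p - c) 0 with hflat | hrise
  · rw [show truncRise f c p q = 0 from max_eq_right hflat, add_zero]
    exact ih _ hlen hus hD _ (isPartition_concat_iff.2 ⟨hLp, hap, hpq.trans hqs⟩) rfl
  have hDp : downTruncVar f u p c ≠ ⊤ :=
    ne_top_of_le_ne_top hD (downTruncVar_mono hc le_rfl (hpq.trans hqs))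
  have hLp' := ih _ hlen hup hDp _ (isPartition_concat_iff.2 ⟨hLp, hap, le_rfl⟩) rfl
  -- the fall from `q` to `s` pays for the rise on `(p, q)`
  have hglue : (downTruncVar f u p c).toReal + truncFall f c q s ≤
      (downTruncVar f u s c).toReal :=
    toReal_weightedVar_add_le_of_le (truncFall_nonneg f c) (truncFall_self hc) hup hpq hqs
      le_rfl hD
  have : f q - f s - c ≤ truncFall f c q s := le_max_left _ _
  rw [show truncRise f c p q = f q - f p - c from max_eq_left hrise]
  linarith

theorem chainSum_truncRise_add_chainSum_truncFall_le_of_shorter (hc : 0 ≤ c) {a s p q p' q' : ℝ}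
    {L M : List ℝ} (hLp : IsPartition a p L) (hap : a ≤ p) (hpq : p ≤ q) (hqs : q ≤ s)
    (hMp' : IsPartition a p' M) (hap' : a ≤ p') (hpq' : p' ≤ q') (hqs' : q' ≤ s) (hqq' : q ≤ q')
    (hshort : ∀ {m x y : ℝ} {L₁ M₁ : List ℝ}, L₁.length + M₁.length < L.length + M.length + 4 →
      IsPartition a m L₁ → IsPartition a m M₁ → a ≤ m → m ≤ x → x ≤ y → y ≤ s →
      chainSum (truncRise f c) L₁ + chainSum (truncFall f c) M₁ + truncDist f c x y ≤
        (truncVar f a s c).toReal) :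
    chainSum (truncRise f c) (L ++ [p] ++ [q]) + chainSum (truncFall f c) (M ++ [p'] ++ [q']) ≤
      (truncVar f a s c).toReal := by
  rw [chainSum_concat_concat, chainSum_concat_concat]
  rcases le_or_gt (f q - f p) c with hflat | hrise
  · have := hshort (L₁ := L ++ [p]) (M₁ := M ++ [p'] ++ [q']) (by simp; omega)
      (isPartition_concat_iff.2 ⟨hLp, hap, hpq.trans hqs⟩)
      (isPartition_concat_concat_iff.2 ⟨hMp', hap', hpq', hqs'⟩) (hap.trans (hpq.trans hqs))
      le_rfl le_rfl le_rfl
    rw [chainSum_concat_concat, truncDist_self hc] at this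
    linarith [show truncRise f c p q = 0 from max_eq_right (by linarith)]
  rcases le_or_gt (f p' - f q') c with hflat' | hfall
  · have := hshort (L₁ := L ++ [p] ++ [q]) (M₁ := M ++ [p']) (by simp; omega)
      (isPartition_concat_concat_iff.2 ⟨hLp, hap, hpq, hqs⟩)
      (isPartition_concat_iff.2 ⟨hMp', hap', hpq'.trans hqs'⟩) (hap'.trans (hpq'.trans hqs'))
      le_rfl le_rfl le_rfl
    rw [chainSum_concat_concat, truncDist_self hc] at this
    linarith [show truncFall f c p' q' = 0 from max_eq_right (by linarith)]
  rcases le_or_gt q p' with hqp' | hp'q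
  · have := hshort (L₁ := L ++ [p] ++ [q]) (M₁ := M ++ [p']) (by simp; omega)
      (isPartition_concat_concat_iff.2 ⟨hLp, hap, hpq, hqp'⟩)
      (isPartition_concat_iff.2 ⟨hMp', hap', le_rfl⟩) hap' le_rfl hpq' hqs'
    rw [chainSum_concat_concat] at this
    linarith [truncFall_le_truncDist f c p' q']
  -- overlapping links: trade `(p, q)` and `(p', q')` for `(p, p')` and `(q, q')`
  have hswap := truncRise_add_truncFall_le f c hrise.le hfall.le
  rcases le_total p p' with hpp' | hp'p
  · have := hshort (L₁ := L ++ [p] ++ [p']) (M₁ := M ++ [p']) (by simp; omega)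
      (isPartition_concat_concat_iff.2 ⟨hLp, hap, hpp', le_rfl⟩)
      (isPartition_concat_iff.2 ⟨hMp', hap', le_rfl⟩) hap' hp'q.le hqq' hqs'
    rw [chainSum_concat_concat] at this
    linarith
  · have := hshort (L₁ := L ++ [p]) (M₁ := M ++ [p'] ++ [p]) (by simp; omega)
      (isPartition_concat_iff.2 ⟨hLp, hap, le_rfl⟩)
      (isPartition_concat_concat_iff.2 ⟨hMp', hap', hp'p, le_rfl⟩) hap hpq hqq' hqs'
    rw [chainSum_concat_concat, truncFall_eq_truncRise f c p' p] at this
    linarith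

theorem chainSum_truncRise_add_chainSum_truncFall_le (hc : 0 ≤ c) {a s : ℝ} {L M : List ℝ}
    (hT : truncVar f a s c ≠ ⊤) (hL : IsPartition a s L) (hM : IsPartition a s M) :
    chainSum (truncRise f c) L + chainSum (truncFall f c) M ≤ (truncVar f a s c).toReal := by
  induction hn : L.length + M.length using Nat.strong_induction_on generalizing f s L M with
  | _ n ih =>
  rcases chainSum_eq_zero_or_exists_concat_concat (w := truncRise f c) L with hL0 | ⟨L, p, q, rfl⟩
  · simpa [hL0] using chainSum_truncFall_le_toReal_truncVar hc hT hM
  rcases chainSum_eq_zero_or_exists_concat_concat (w := truncFall f c) M with hM0 | ⟨M, p', q', rfl⟩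
  · simpa [hM0] using chainSum_truncRise_le_toReal_truncVar hc hT hL
  obtain ⟨hLp, hap, hpq, hqs⟩ := isPartition_concat_concat_iff.1 hL
  obtain ⟨hMp', hap', hpq', hqs'⟩ := isPartition_concat_concat_iff.1 hM
  simp only [List.length_append, List.length_singleton] at hn
  clear hL hM
  wlog hqq' : q ≤ q' generalizing f L M p q p' q'
  · have := this (f := -f) (by rwa [truncVar_neg]) M p' q' L p q hMp' hap' hpq' hqs' hLp hap hpq
      hqs (by omega) (le_of_not_ge hqq')
    rw [truncRise_neg, truncFall_neg, truncVar_neg] at this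
    linarith
  refine chainSum_truncRise_add_chainSum_truncFall_le_of_shorter hc hLp hap hpq hqs hMp' hap' hpq'
    hqs' hqq' fun hlen hL₁ hM₁ ham hmx hxy hys => ?_
  have hTm := ne_top_of_le_ne_top hT (truncVar_mono hc le_rfl (hmx.trans (hxy.trans hys)))
  linarith [ih _ (by omega) hTm hL₁ hM₁ rfl,
    toReal_truncVar_add_truncDist_le hc hT ham hmx hxy hys]

theorem toReal_upTruncVar_add_toReal_downTruncVar_le (hc : 0 ≤ c) {a s : ℝ}
    (hT : truncVar f a s c ≠ ⊤) :
    (upTruncVar f a s c).toReal + (downTruncVar f a s c).toReal ≤ (truncVar f a s c).toReal := by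
  rw [upTruncVar_eq_weightedVar, downTruncVar_eq_weightedVar]
  have hU : ∀ M, IsPartition a s M → (weightedVar (truncRise f c) a s).toReal ≤
      (truncVar f a s c).toReal - chainSum (truncFall f c) M := fun M hM =>
    toReal_weightedVar_le (truncRise_nonneg f c) fun L hL => by
      linarith [chainSum_truncRise_add_chainSum_truncFall_le hc hT hL hM]
  have := toReal_weightedVar_le (truncFall_nonneg f c) (a := a) (b := s)
    (x := (truncVar f a s c).toReal - (weightedVar (truncRise f c) a s).toReal) fun M hM => by
      linarith [hU M hM]
  linarith

end TruncatedVariations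

section Optimality

variable {f : ℝ → ℝ} {c : ℝ}

noncomputable def utvSubDtv (f : ℝ → ℝ) (a c t : ℝ) : ℝ :=
  f a + (upTruncVar f a t c).toReal - (downTruncVar f a t c).toReal

theorem abs_utvSubDtv_sub_sub_le (hc : 0 ≤ c) {a u s : ℝ} (hT : truncVar f a s c ≠ ⊤)
    (hau : a ≤ u) (hus : u ≤ s) :
    |(utvSubDtv f a c s - utvSubDtv f a c u) - (f s - f u)| ≤ c := by
  have hrise := toReal_upTruncVar_le hc hus (upTruncVar_ne_top hc hT le_rfl hus)
    (downTruncVar_ne_top hc hT hau le_rfl)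
  have hfall := toReal_upTruncVar_le (f := -f) hc hus
    (by rw [upTruncVar_neg]; exact downTruncVar_ne_top hc hT le_rfl hus)
    (by rw [downTruncVar_neg]; exact upTruncVar_ne_top hc hT hau le_rfl)
  rw [upTruncVar_neg, upTruncVar_neg, downTruncVar_neg, Pi.neg_apply, Pi.neg_apply] at hfall
  have hU := toReal_upTruncVar_add_le hc hau hus (upTruncVar_ne_top hc hT le_rfl le_rfl)
  have hD := toReal_downTruncVar_add_le hc hau hus (downTruncVar_ne_top hc hT le_rfl le_rfl)
  simp only [utvSubDtv]
  rw [abs_le]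
  constructor <;> linarith

theorem totalVar_utvSubDtv (hc : 0 ≤ c) {a s : ℝ} (hT : truncVar f a s c ≠ ⊤) :
    totalVar (utvSubDtv f a c) a s = truncVar f a s c := by
  rw [totalVar_eq_weightedVar]
  apply le_antisymm
  · set φ : ℝ → ℝ := fun t => (upTruncVar f a t c).toReal + (downTruncVar f a t c).toReal
    refine (weightedVar_le_ofReal_sub (truncDist_nonneg _ 0) (φ := φ)
      fun p q _ hpq hqs => ?_).trans ?_
    · have hU := ENNReal.toReal_mono (upTruncVar_ne_top hc hT le_rfl hqs)
        (upTruncVar_mono hc le_rfl hpq)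
      have hD := ENNReal.toReal_mono (downTruncVar_ne_top hc hT le_rfl hqs)
        (downTruncVar_mono hc le_rfl hpq)
      simp only [truncDist, utvSubDtv, sub_zero, φ]
      exact max_le (abs_le.2 ⟨by linarith, by linarith⟩) (by linarith)
    · rw [← ENNReal.ofReal_toReal hT]
      refine ENNReal.ofReal_le_ofReal ?_
      have := toReal_upTruncVar_add_toReal_downTruncVar_le hc hT
      simp only [φ]
      linarith [ENNReal.toReal_nonneg (a := upTruncVar f a a c),
        ENNReal.toReal_nonneg (a := downTruncVar f a a c)]
  · rw [truncVar_eq_weightedVar]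
    refine weightedVar_mono_weight (truncDist_nonneg f c) (truncDist_nonneg _ 0)
      (truncDist_self le_rfl) fun p q hap hpq hqs => ?_
    have := abs_utvSubDtv_sub_sub_le hc
      (ne_top_of_le_ne_top hT (truncVar_mono hc le_rfl hqs)) hap hpq
    have := abs_sub_abs_le_abs_sub (f q - f p) (utvSubDtv f a c q - utvSubDtv f a c p)
    rw [abs_sub_comm (f q - f p)] at this
    simp only [truncDist, sub_zero]
    exact max_le_max (by linarith) le_rfl

end Optimality

section Cadlag

variable {f : ℝ → ℝ} {ε a b : ℝ}

def IsOscillationCut (f : ℝ → ℝ) (ε a b : ℝ) (F : Finset ℝ) : Prop :=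
  ∀ p ∈ Icc a b, ∀ q ∈ Icc a b, p ≤ q → (∀ t ∈ F, t ∉ Ioc p q) → |f q - f p| ≤ ε

lemma isOscillationCut_self (hε : 0 ≤ ε) : IsOscillationCut f ε a a ∅ := by
  rintro p ⟨hap, hpa⟩ q ⟨haq, hqa⟩ - -
  simpa [le_antisymm hpa hap, le_antisymm hqa haq] using hε

lemma IsOscillationCut.extend {r r' : ℝ} {F : Finset ℝ} (hε : 0 ≤ ε)
    (hF : IsOscillationCut f ε a r F) (hosc : ∀ p ∈ Ico r r', ∀ q ∈ Ico r r', |f q - f p| ≤ ε) :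
    IsOscillationCut f ε a r' (insert r (insert r' F)) := by
  intro p hp q hq hpq hsep
  rcases le_or_gt q r with hqr | hrq
  · exact hF p ⟨hp.1, hpq.trans hqr⟩ q ⟨hq.1, hqr⟩ hpq fun t ht => hsep t (by simp [ht])
  have hrp : r ≤ p := not_lt.1 fun hpr => hsep r (by simp) ⟨hpr, hrq.le⟩
  rcases hq.2.lt_or_eq with hqr' | rfl
  · exact hosc p ⟨hrp, hpq.trans_lt hqr'⟩ q ⟨hrp.trans hpq, hqr'⟩
  obtain rfl : p = q := hpq.antisymm (not_lt.1 fun hpq' => hsep q (by simp) ⟨hpq', le_rfl⟩)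
  simpa using hε

lemma exists_mem_abs_sub_le_of_tendsto {X : Type*} {g : X → ℝ} {l : Filter X} {L : ℝ}
    (h : Tendsto g l (𝓝 L)) (hε : 0 < ε) : ∃ S ∈ l, ∀ p ∈ S, ∀ q ∈ S, |g q - g p| ≤ ε := by
  refine ⟨g ⁻¹' Metric.closedBall L (ε / 2), h (Metric.closedBall_mem_nhds L (half_pos hε)),
    fun p hp q hq => ?_⟩
  simp only [mem_preimage, Metric.mem_closedBall, Real.dist_eq] at hp hq
  linarith [abs_sub_le (g q) L (g p), abs_sub_comm L (g p)]

theorem CadlagOn.exists_isOscillationCut (hf : CadlagOn f a b) (hab : a ≤ b) (hε : 0 < ε) :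
    ∃ F, IsOscillationCut f ε a b F := by
  set S := {x | x ∈ Icc a b ∧ ∃ F, IsOscillationCut f ε a x F}
  have haS : a ∈ S := ⟨⟨le_rfl, hab⟩, ∅, isOscillationCut_self hε.le⟩
  have hbdd : BddAbove S := ⟨b, fun x hx => hx.1.2⟩
  have hat : a ≤ sSup S := le_csSup hbdd haS
  have htb : sSup S ≤ b := csSup_le ⟨a, haS⟩ fun x hx => hx.1.2
  have htS : sSup S ∈ S := by
    rcases hat.eq_or_lt with hat' | hat'
    · rwa [← hat']
    obtain ⟨L, hL⟩ := hf.2 _ ⟨hat', htb⟩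
    obtain ⟨V, hV, hosc⟩ := exists_mem_abs_sub_le_of_tendsto hL hε
    obtain ⟨l, hl, hlV⟩ := mem_nhdsLT_iff_exists_Ioo_subset.1 hV
    obtain ⟨r, hrS, hlr⟩ := exists_lt_of_lt_csSup ⟨a, haS⟩ (max_lt hl hat')
    rcases (le_csSup hbdd hrS).eq_or_lt with hrt | hrt
    · rwa [← hrt]
    obtain ⟨F, hF⟩ := hrS.2
    have hIco : Ico r (sSup S) ⊆ V := fun x hx =>
      hlV ⟨(le_max_left l a).trans_lt (hlr.trans_le hx.1), hx.2⟩
    exact ⟨⟨hat, htb⟩, _, hF.extend hε.le fun p hp q hq => hosc p (hIco hp) q (hIco hq)⟩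
  rcases htb.eq_or_lt with htb' | htb'
  · rw [← htb']
    exact htS.2
  obtain ⟨V, hV, hosc⟩ :=
    exists_mem_abs_sub_le_of_tendsto (continuousWithinAt_Ioi_iff_Ici.1 (hf.1 _ ⟨hat, htb'⟩)) hε
  obtain ⟨r, hr, hrV⟩ := mem_nhdsGE_iff_exists_Ico_subset.1 hV
  obtain ⟨F, hF⟩ := htS.2
  have hIco : Ico (sSup S) (min r b) ⊆ V := fun x hx => hrV ⟨hx.1, hx.2.trans_le (min_le_left _ _)⟩
  have hmS : min r b ∈ S := ⟨⟨hat.trans (le_min hr.le htb'.le), min_le_right _ _⟩, _,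
    hF.extend hε.le fun p hp q hq => hosc p (hIco hp) q (hIco hq)⟩
  exact absurd (le_csSup hbdd hmS) (not_le.2 (lt_min hr htb'))

lemma IsOscillationCut.abs_le {F : Finset ℝ} (hF : IsOscillationCut f ε a b F) {x : ℝ}
    (hx : x ∈ Icc a b) : |f x| ≤ ∑ t ∈ insert a F, |f t| + ε := by
  have hne : ((insert a F).filter (· ≤ x)).Nonempty := ⟨a, by simp [hx.1]⟩
  obtain ⟨htF, htx⟩ := Finset.mem_filter.1 (Finset.max'_mem _ hne)
  set t := ((insert a F).filter (· ≤ x)).max' hne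
  have hat : a ≤ t := Finset.le_max' _ a (by simp [hx.1])
  have := hF t ⟨hat, htx.trans hx.2⟩ x hx htx fun t' ht' hmem =>
    absurd (Finset.le_max' _ t' (by simp [ht', hmem.2])) (not_le.2 hmem.1)
  linarith [Finset.single_le_sum (fun i _ => abs_nonneg (f i)) htF,
    abs_sub_abs_le_abs_sub (f x) (f t)]

lemma IsOscillationCut.truncDist_le {c M : ℝ} {F : Finset ℝ} (hc : 0 ≤ c)
    (hF : IsOscillationCut f c a b F) (hM : ∀ x ∈ Icc a b, |f x| ≤ M) (hM0 : 0 ≤ M) {p q : ℝ}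
    (hap : a ≤ p) (hpq : p ≤ q) (hqb : q ≤ b) :
    truncDist f c p q ≤
      2 * M * (F.filter (· ≤ q)).card - 2 * M * (F.filter (· ≤ p)).card := by
  have hsub : F.filter (· ≤ p) ⊆ F.filter (· ≤ q) := fun t ht => by
    rw [Finset.mem_filter] at ht ⊢
    exact ⟨ht.1, ht.2.trans hpq⟩
  rcases (Finset.card_le_card hsub).eq_or_lt with heq | hlt
  · have hsame := Finset.eq_of_subset_of_card_le hsub heq.ge
    have : |f q - f p| ≤ c := hF p ⟨hap, hpq.trans hqb⟩ q ⟨hap.trans hpq, hqb⟩ hpq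
      fun t ht hmem => by
        have : t ∈ F.filter (· ≤ p) := hsame ▸ Finset.mem_filter.2 ⟨ht, hmem.2⟩
        exact absurd (Finset.mem_filter.1 this).2 (not_le.2 hmem.1)
    rw [heq, sub_self]
    exact max_le (by linarith) le_rfl
  have hcross : (1 : ℝ) ≤ (F.filter (· ≤ q)).card - (F.filter (· ≤ p)).card := by
    have : ((F.filter (· ≤ p)).card + 1 : ℝ) ≤ (F.filter (· ≤ q)).card := by exact_mod_cast hlt
    linarith
  have : |f q - f p| ≤ 2 * M := by
    linarith [abs_sub (f q) (f p), hM p ⟨hap, hpq.trans hqb⟩, hM q ⟨hap.trans hpq, hqb⟩]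
  calc truncDist f c p q ≤ 2 * M := max_le (by linarith) (by positivity)
    _ ≤ 2 * M * ((F.filter (· ≤ q)).card - (F.filter (· ≤ p)).card) :=
      le_mul_of_one_le_right (by positivity) hcross
    _ = _ := by ring

theorem CadlagOn.truncVar_ne_top {c : ℝ} (hf : CadlagOn f a b) (hc : 0 < c) (hab : a ≤ b) :
    truncVar f a b c ≠ ⊤ := by
  obtain ⟨F, hF⟩ := hf.exists_isOscillationCut hab hc
  rw [truncVar_eq_weightedVar]
  refine ne_top_of_le_ne_top ENNReal.ofReal_ne_top (weightedVar_le_ofReal_sub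
    (truncDist_nonneg f c) fun p q hap hpq hqb =>
      hF.truncDist_le hc.le (fun x hx => hF.abs_le hx) (by positivity) hap hpq hqb)

end Cadlag

theorem utv_sub_dtv_is_optimal_general
    (a b c : ℝ) (hc : 0 < c) (f : ℝ → ℝ) (hf : CadlagOn f a b) :
    (∀ u ∈ Set.Icc a b, ∀ s ∈ Set.Icc a b, u ≤ s →
      |((f a + (upTruncVar f a s c).toReal - (downTruncVar f a s c).toReal) -
        (f a + (upTruncVar f a u c).toReal - (downTruncVar f a u c).toReal)) -
       (f s - f u)| ≤ c) ∧
    (∀ s ∈ Set.Ioc a b,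
      totalVar (fun t => f a + (upTruncVar f a t c).toReal -
        (downTruncVar f a t c).toReal) a s = truncVar f a s c) := by
  have hT : ∀ s ∈ Icc a b, truncVar f a s c ≠ ⊤ := fun s hs =>
    ne_top_of_le_ne_top (hf.truncVar_ne_top hc (hs.1.trans hs.2)) (truncVar_mono hc.le le_rfl hs.2)
  exact ⟨fun u hu s hs hus => abs_utvSubDtv_sub_sub_le hc.le (hT s hs) hu.1 hus,
    fun s hs => totalVar_utvSubDtv hc.le (hT s (Ioc_subset_Icc_self hs))⟩

/-- The function `g = f(a) + UTV^c(f,[a,·]) - DTV^c(f,[a,·])` has increments uniformly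
`c`-close to those of `f` and realizes the truncated variation on every `[a,s]`. -/
theorem utv_sub_dtv_is_optimal
    (a b c : ℝ) (hab : a < b) (hc : 0 < c) (f : ℝ → ℝ) (hf : CadlagOn f a b) :
    (∀ u ∈ Set.Icc a b, ∀ s ∈ Set.Icc a b, u ≤ s →
      |((f a + (upTruncVar f a s c).toReal - (downTruncVar f a s c).toReal) -
        (f a + (upTruncVar f a u c).toReal - (downTruncVar f a u c).toReal)) -
       (f s - f u)| ≤ c) ∧
    (∀ s ∈ Set.Ioc a b,
      totalVar (fun t => f a + (upTruncVar f a t c).toReal -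
        (downTruncVar f a t c).toReal) a s = truncVar f a s c) :=
  utv_sub_dtv_is_optimal_general a b c hc f hf
end
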